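/- arXiv:1707.09859 — 3 statements merged into one kernel-verified Lean document; each statement's English description precedes it below -/
import Mathlib

section
/- Let A be a symmetric positive semidefinite n×n real matrix and f : ℝⁿ → ℝⁿ a Lipschitz gradient field, f = ∇F with F : ℝⁿ → ℝ, and let L be a Lipschitz constant of f. Define E(u) = ½⟨Au, u⟩ + F(u). For the semi-implicit scheme (u^{k+1} − u^k)/Δt + A u^{k+1} + f(u^k) = 0, if 0 < Δt < 2/L then E(u^{k+1}) ≤ E(u^k) for every k. -/
/-!
The step `v = u' - u` satisfies `⟪A u' + f u, v⟫ = -‖v‖² / Δt` by the scheme. The quadratic part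
of the energy changes by at most `⟪A u', v⟫`, because `A` is positive semidefinite (it is
treated implicitly), and the descent lemma bounds the change of `F` by `⟪f u, v⟫ + L/2 ‖v‖²`
(it is treated explicitly). Hence `E u' + (1/Δt - L/2) ‖v‖² ≤ E u`.
-/

open scoped RealInnerProductSpace NNReal

variable {E : Type*} [NormedAddCommGroup E] [InnerProductSpace ℝ E]

/-- The descent lemma for a function with `L`-Lipschitz gradient. -/
theorem LipschitzWith.apply_add_le_of_hasGradientAt [CompleteSpace E] {F : E → ℝ} {f : E → E}
    {L : ℝ≥0} (hf : LipschitzWith L f) (hgrad : ∀ x, HasGradientAt F (f x) x) (u v : E) :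
    F (u + v) ≤ F u + ⟪f u, v⟫ + L / 2 * ‖v‖ ^ 2 := by
  -- `φ` is antitone on `[0, ∞)`, and `φ 1 ≤ φ 0` is the claim.
  set φ : ℝ → ℝ := fun t ↦ F (u + t • v) - t * ⟪f u, v⟫ - L / 2 * t ^ 2 * ‖v‖ ^ 2
  have hφ : ∀ t, HasDerivAt φ (⟪f (u + t • v) - f u, v⟫ - L * t * ‖v‖ ^ 2) t := by
    intro t
    have hline : HasDerivAt (fun s : ℝ ↦ u + s • v) v t := by
      simpa using ((hasDerivAt_id t).smul_const v).const_add u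
    have hF := (hgrad (u + t • v)).hasFDerivAt.comp_hasDerivAt t hline
    refine ((hF.sub ((hasDerivAt_id t).mul_const ⟪f u, v⟫)).sub
      (((hasDerivAt_pow 2 t).const_mul ((L : ℝ) / 2)).mul_const (‖v‖ ^ 2))).congr_deriv ?_
    simp only [InnerProductSpace.toDual_apply_apply, inner_sub_left, Nat.cast_ofNat]
    ring
  have hφ'_nonpos : ∀ t, 0 ≤ t → ⟪f (u + t • v) - f u, v⟫ - L * t * ‖v‖ ^ 2 ≤ 0 := by
    intro t ht
    rw [sub_nonpos]
    have hLip : ‖f (u + t • v) - f u‖ ≤ L * (t * ‖v‖) := by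
      simpa [norm_smul, abs_of_nonneg ht] using hf.norm_sub_le (u + t • v) u
    calc ⟪f (u + t • v) - f u, v⟫ ≤ ‖f (u + t • v) - f u‖ * ‖v‖ := real_inner_le_norm _ _
      _ ≤ L * (t * ‖v‖) * ‖v‖ := by gcongr
      _ = L * t * ‖v‖ ^ 2 := by ring
  have hanti : AntitoneOn φ (Set.Ici 0) :=
    antitoneOn_of_hasDerivWithinAt_nonpos (convex_Ici 0)
      (fun t _ ↦ (hφ t).continuousAt.continuousWithinAt)
      (fun t _ ↦ (hφ t).hasDerivWithinAt)
      (fun t ht ↦ hφ'_nonpos t (le_of_lt (by simpa using ht)))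
  have hφ_one_le := hanti Set.self_mem_Ici (Set.mem_Ici.2 zero_le_one) zero_le_one
  simp only [φ, one_smul, zero_smul, add_zero] at hφ_one_le
  linarith

theorem LinearMap.IsPositive.inner_map_self_sub_inner_map_self_le {T : E →ₗ[ℝ] E}
    (hT : T.IsPositive) (x y : E) : ⟪T x, x⟫ - ⟪T y, y⟫ ≤ 2 * ⟪T x, x - y⟫ := by
  have hxy := hT.inner_nonneg_left (x - y)
  have hsymm : ⟪T y, x⟫ = ⟪T x, y⟫ := by rw [hT.isSymmetric, real_inner_comm]
  simp only [map_sub, inner_sub_left, inner_sub_right, hsymm] at hxy ⊢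
  linarith

variable (T : E →ₗ[ℝ] E) (F : E → ℝ)

/-- The energy of the gradient flow `u_t + T u + ∇F u = 0`. -/
noncomputable def gradientFlowEnergy (u : E) : ℝ := 1 / 2 * ⟪T u, u⟫ + F u

variable {T F}

theorem gradientFlowEnergy_semiImplicit_step_le [CompleteSpace E] (hT : T.IsPositive)
    {f : E → E} {L : ℝ≥0} (hgrad : ∀ x, HasGradientAt F (f x) x) (hf : LipschitzWith L f)
    {τ : ℝ} {u u' : E} (hscheme : τ⁻¹ • (u' - u) + T u' + f u = 0) :
    gradientFlowEnergy T F u' + (τ⁻¹ - L / 2) * ‖u' - u‖ ^ 2 ≤ gradientFlowEnergy T F u := by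
  have hstep : τ⁻¹ * ‖u' - u‖ ^ 2 + ⟪T u', u' - u⟫ + ⟪f u, u' - u⟫ = 0 := by
    simpa only [inner_add_left, real_inner_smul_left, real_inner_self_eq_norm_sq, inner_zero_left]
      using congrArg (⟪·, u' - u⟫) hscheme
  have hquad := hT.inner_map_self_sub_inner_map_self_le u' u
  have hdescent := hf.apply_add_le_of_hasGradientAt hgrad u (u' - u)
  rw [add_sub_cancel] at hdescent
  unfold gradientFlowEnergy
  linarith

/-- the semi-implicit scheme `(u' − u)/Δt + A u' + f(u) = 0` for the
gradient flow with energy `E(u) = ½⟨Au,u⟩ + F(u)` is energy diminishing under the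
time-step restriction `0 < Δt < 2/L`, `L` a Lipschitz constant of `f = ∇F`. -/
theorem semiImplicit_energy_diminishing
    {n : ℕ} (A : Matrix (Fin n) (Fin n) ℝ) (hA : A.PosSemidef)
    (F : EuclideanSpace ℝ (Fin n) → ℝ) (f : EuclideanSpace ℝ (Fin n) → EuclideanSpace ℝ (Fin n))
    (hgrad : ∀ x, HasGradientAt F (f x) x)
    (L : NNReal) (hf : LipschitzWith L f)
    (E : EuclideanSpace ℝ (Fin n) → ℝ)
    (hE : ∀ u, E u = (1 / 2) * ⟪Matrix.toEuclideanLin A u, u⟫ + F u)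
    (Δt : ℝ) (hΔt : 0 < Δt) (hΔtL : Δt < 2 / (L : ℝ))
    (u u' : EuclideanSpace ℝ (Fin n))
    (hscheme : Δt⁻¹ • (u' - u) + Matrix.toEuclideanLin A u' + f u = 0) :
    E u' ≤ E u := by
  -- `2 / 0 = 0`, so the step restriction already forces `L > 0`.
  have hL : 0 < (L : ℝ) := (div_pos_iff_of_pos_left two_pos).1 (hΔt.trans hΔtL)
  have hτ : (L : ℝ) / 2 ≤ Δt⁻¹ := by
    rw [le_inv_comm₀ (by positivity) hΔt, inv_div]
    exact hΔtL.le
  have hEeq : E = gradientFlowEnergy (Matrix.toEuclideanLin A) F := funext hE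
  have hdecay := gradientFlowEnergy_semiImplicit_step_le
    (Matrix.isPositive_toEuclideanLin_iff.2 hA) hgrad hf hscheme
  rw [hEeq]
  linarith [mul_nonneg (sub_nonneg.2 hτ) (sq_nonneg ‖u' - u‖)]
end

section
/- Let A be a symmetric positive semidefinite n×n real matrix, F : ℝⁿ → ℝ differentiable, and define E(u) = ½⟨Au,u⟩ + F(u). Suppose the fully implicit scheme (u^{k+1} − u^k)/Δt + A u^{k+1} + g(u^k, u^{k+1}) = 0 holds, where g : ℝⁿ × ℝⁿ → ℝⁿ satisfies the secant condition ⟨g(u,v), v − u⟩ = F(v) − F(u) for all u, v. Then E(u^{k+1}) ≤ E(u^k) for every Δt > 0, i.e. the scheme is unconditionally energy stable. -/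
/-!
Pairing the scheme with `u' - u` and using the secant condition gives the discrete energy law
`E(u') - E(u) = -Δt⁻¹ ‖u' - u‖² - ½ ⟪A (u' - u), u' - u⟫`
(the symmetry of `A` turns `⟪A u', u' - u⟫` into a difference of quadratic energies plus a
square). Both terms on the right are nonpositive when `A` is positive semidefinite and `Δt > 0`.
-/

open scoped RealInnerProductSpace

variable {V : Type*} [NormedAddCommGroup V] [InnerProductSpace ℝ V]

namespace LinearMap

theorem IsSymmetric.inner_apply_sub_eq {T : V →ₗ[ℝ] V} (hT : T.IsSymmetric) (u v : V) :
    ⟪T v, v - u⟫ = 1 / 2 * ⟪T v, v⟫ - 1 / 2 * ⟪T u, u⟫ + 1 / 2 * ⟪T (v - u), v - u⟫ := by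
  have hswap : ⟪T u, v⟫ = ⟪T v, u⟫ := by rw [hT u v, real_inner_comm]
  simp only [map_sub, inner_sub_left, inner_sub_right, hswap]
  ring

end LinearMap

noncomputable def quadraticEnergy (T : V →ₗ[ℝ] V) (F : V → ℝ) (w : V) : ℝ :=
  1 / 2 * ⟪T w, w⟫ + F w

theorem quadraticEnergy_sub_of_implicit_secant_step {T : V →ₗ[ℝ] V} (hT : T.IsSymmetric)
    {F : V → ℝ} {g : V → V → V} (hsecant : ∀ u v, ⟪g u v, v - u⟫ = F v - F u)
    {τ : ℝ} {u v : V} (hstep : τ⁻¹ • (v - u) + T v + g u v = 0) :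
    quadraticEnergy T F v - quadraticEnergy T F u =
      -(τ⁻¹ * ‖v - u‖ ^ 2) - 1 / 2 * ⟪T (v - u), v - u⟫ := by
  have hpaired : τ⁻¹ * ‖v - u‖ ^ 2 + ⟪T v, v - u⟫ + (F v - F u) = 0 := by
    have h := congrArg (⟪·, v - u⟫) hstep
    simpa only [inner_add_left, real_inner_smul_left, real_inner_self_eq_norm_sq, hsecant,
      inner_zero_left] using h
  rw [hT.inner_apply_sub_eq] at hpaired
  unfold quadraticEnergy
  linarith

theorem quadraticEnergy_le_of_implicit_secant_step {T : V →ₗ[ℝ] V} (hT : T.IsPositive)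
    {F : V → ℝ} {g : V → V → V} (hsecant : ∀ u v, ⟪g u v, v - u⟫ = F v - F u)
    {τ : ℝ} (hτ : 0 ≤ τ) {u v : V} (hstep : τ⁻¹ • (v - u) + T v + g u v = 0) :
    quadraticEnergy T F v ≤ quadraticEnergy T F u := by
  have hdiss := quadraticEnergy_sub_of_implicit_secant_step hT.isSymmetric hsecant hstep
  have hkinetic : 0 ≤ τ⁻¹ * ‖v - u‖ ^ 2 := by positivity
  have hquadratic := hT.inner_nonneg_left (v - u)
  linarith

theorem implicit_secant_scheme_energy_stable_general
    {n : ℕ} (A : Matrix (Fin n) (Fin n) ℝ) (hA : A.PosSemidef)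
    (F : EuclideanSpace ℝ (Fin n) → ℝ)
    (g : EuclideanSpace ℝ (Fin n) → EuclideanSpace ℝ (Fin n) → EuclideanSpace ℝ (Fin n))
    (hsecant : ∀ u v, ⟪g u v, v - u⟫ = F v - F u)
    (E : EuclideanSpace ℝ (Fin n) → ℝ)
    (hE : ∀ u, E u = (1 / 2) * ⟪Matrix.toEuclideanLin A u, u⟫ + F u)
    (Δt : ℝ) (hΔt : 0 < Δt)
    (u u' : EuclideanSpace ℝ (Fin n))
    (hscheme : Δt⁻¹ • (u' - u) + Matrix.toEuclideanLin A u' + g u u' = 0) :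
    E u' ≤ E u := by
  rw [hE, hE]
  exact quadraticEnergy_le_of_implicit_secant_step (Matrix.isPositive_toEuclideanLin_iff.mpr hA)
    hsecant hΔt.le hscheme

/-- the fully implicit scheme `(u' − u)/Δt + A u' + g(u, u') = 0`,
where `g` satisfies the secant condition `⟨g(u,v), v − u⟩ = F(v) − F(u)`,
is unconditionally energy stable: `E(u') ≤ E(u)` for every `Δt > 0`. -/
theorem implicit_secant_scheme_energy_stable
    {n : ℕ} (A : Matrix (Fin n) (Fin n) ℝ) (hA : A.PosSemidef)
    (F : EuclideanSpace ℝ (Fin n) → ℝ) (hF : Differentiable ℝ F)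
    (g : EuclideanSpace ℝ (Fin n) → EuclideanSpace ℝ (Fin n) → EuclideanSpace ℝ (Fin n))
    (hsecant : ∀ u v, ⟪g u v, v - u⟫ = F v - F u)
    (E : EuclideanSpace ℝ (Fin n) → ℝ)
    (hE : ∀ u, E u = (1 / 2) * ⟪Matrix.toEuclideanLin A u, u⟫ + F u)
    (Δt : ℝ) (hΔt : 0 < Δt)
    (u u' : EuclideanSpace ℝ (Fin n))
    (hscheme : Δt⁻¹ • (u' - u) + Matrix.toEuclideanLin A u' + g u u' = 0) :
    E u' ≤ E u :=
  implicit_secant_scheme_energy_stable_general A hA F g hsecant E hE Δt hΔt u u' hscheme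
end

section
/- Let A be a symmetric positive semidefinite matrix and F a C¹ function on ℝⁿ with F convex-splittable as F = F_c − F_e where F_c, F_e are convex and C¹. Then for the convex-splitting scheme (u^{k+1} − u^k)/Δt + A u^{k+1} + ∇F_c(u^{k+1}) − ∇F_e(u^k) = 0, the energy E(u) = ½⟨Au,u⟩ + F(u) satisfies E(u^{k+1}) ≤ E(u^k) for every Δt > 0. -/
/-!
Restricted to the segment from `x` to `y`, a convex function lies above its tangent line at
`x`. Applied to `F_c` at `u^{k+1}` and to `F_e` at `u^k`, this bounds
`F(u^{k+1}) - F(u^k)` by `⟪∇F_c(u^{k+1}) - ∇F_e(u^k), u^{k+1} - u^k⟫`, while for the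
quadratic part the symmetry and positivity of `A` give
`½⟪A u^{k+1}, u^{k+1}⟫ - ½⟪A u^k, u^k⟫ ≤ ⟪A u^{k+1}, u^{k+1} - u^k⟫`.
Adding up and pairing the scheme with `u^{k+1} - u^k`, the energy drops by at least
`‖u^{k+1} - u^k‖² / Δt`.
-/

open scoped RealInnerProductSpace

theorem ConvexOn.add_fderiv_sub_le {E : Type*} [NormedAddCommGroup E] [NormedSpace ℝ E]
    {s : Set E} {f : E → ℝ} {f' : E →L[ℝ] ℝ} {x y : E}
    (hf : ConvexOn ℝ s f) (hx : x ∈ s) (hy : y ∈ s) (hf' : HasFDerivAt f f' x) :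
    f x + f' (y - x) ≤ f y := by
  set L : ℝ →ᵃ[ℝ] E := AffineMap.lineMap x y
  have hL0 : L 0 = x := AffineMap.lineMap_apply_zero x y
  have hL1 : L 1 = y := AffineMap.lineMap_apply_one x y
  have hderiv : HasDerivAt (f ∘ L) (f' (y - x)) 0 :=
    (hL0 ▸ hf').comp_hasDerivAt 0 AffineMap.hasDerivAt_lineMap
  have hslope := (hf.comp_affineMap L).le_slope_of_hasDerivAt
    (by rwa [Set.mem_preimage, hL0]) (by rwa [Set.mem_preimage, hL1]) one_pos hderiv
  rw [slope_def_field] at hslope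
  simp only [Function.comp_apply, hL0, hL1, sub_zero, div_one] at hslope
  linarith

section InnerProduct

variable {E : Type*} [NormedAddCommGroup E] [InnerProductSpace ℝ E]

theorem ConvexOn.add_inner_sub_le_of_hasGradientAt [CompleteSpace E] {s : Set E} {f : E → ℝ}
    {g x y : E} (hf : ConvexOn ℝ s f) (hx : x ∈ s) (hy : y ∈ s) (hg : HasGradientAt f g x) :
    f x + ⟪g, y - x⟫ ≤ f y := by
  simpa using hf.add_fderiv_sub_le hx hy hg.hasFDerivAt

theorem LinearMap.IsSymmetric.inner_map_self_sub_inner_map_self {T : E →ₗ[ℝ] E}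
    (hT : T.IsSymmetric) (x y : E) :
    ⟪T y, y⟫ - ⟪T x, x⟫ = 2 * ⟪T y, y - x⟫ - ⟪T (y - x), y - x⟫ := by
  have hxy : ⟪T x, y⟫ = ⟪T y, x⟫ := by rw [hT x y, real_inner_comm]
  simp only [map_sub, inner_sub_left, inner_sub_right]
  linarith

theorem LinearMap.IsPositive.half_inner_map_self_sub_le {T : E →ₗ[ℝ] E} (hT : T.IsPositive)
    (x y : E) : 1 / 2 * ⟪T y, y⟫ - 1 / 2 * ⟪T x, x⟫ ≤ ⟪T y, y - x⟫ := by
  have := hT.isSymmetric.inner_map_self_sub_inner_map_self x y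
  nlinarith [hT.inner_nonneg_left (y - x)]

theorem convexSplitting_energy_dissipation [CompleteSpace E] {T : E →ₗ[ℝ] E}
    (hT : T.IsPositive) {Fc Fe : E → ℝ} (hFc : ConvexOn ℝ Set.univ Fc)
    (hFe : ConvexOn ℝ Set.univ Fe) {gc ge u u' : E} (hgc : HasGradientAt Fc gc u')
    (hge : HasGradientAt Fe ge u) (Δt : ℝ)
    (hscheme : Δt⁻¹ • (u' - u) + T u' + gc - ge = 0) :
    1 / 2 * ⟪T u', u'⟫ + (Fc u' - Fe u') + Δt⁻¹ * ‖u' - u‖ ^ 2 ≤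
      1 / 2 * ⟪T u, u⟫ + (Fc u - Fe u) := by
  have hquad := hT.half_inner_map_self_sub_le u u'
  have hc := hFc.add_inner_sub_le_of_hasGradientAt trivial trivial hgc (y := u)
  have he := hFe.add_inner_sub_le_of_hasGradientAt trivial trivial hge (y := u')
  have hpair : ⟪T u', u' - u⟫ + ⟪gc, u' - u⟫ - ⟪ge, u' - u⟫ = -(Δt⁻¹ * ‖u' - u‖ ^ 2) := by
    have hstep : T u' + gc - ge = -(Δt⁻¹ • (u' - u)) := by
      linear_combination (norm := module) hscheme
    have := congrArg (⟪·, u' - u⟫) hstep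
    rwa [inner_neg_left, real_inner_smul_left, real_inner_self_eq_norm_sq, inner_sub_left,
      inner_add_left] at this
  rw [← neg_sub u' u, inner_neg_right] at hc
  linarith

end InnerProduct

/-- Eyre's convex-splitting scheme
`(u' − u)/Δt + A u' + ∇F_c(u') − ∇F_e(u) = 0`, `F = F_c − F_e` with `F_c, F_e`
convex and `C¹`, is unconditionally energy diminishing. -/
theorem convexSplitting_energy_diminishing
    {n : ℕ} (A : Matrix (Fin n) (Fin n) ℝ) (hA : A.PosSemidef)
    (Fc Fe : EuclideanSpace ℝ (Fin n) → ℝ)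
    (hFc : ConvexOn ℝ Set.univ Fc) (hFe : ConvexOn ℝ Set.univ Fe)
    (fc fe : EuclideanSpace ℝ (Fin n) → EuclideanSpace ℝ (Fin n))
    (hfc : ∀ x, HasGradientAt Fc (fc x) x) (hfe : ∀ x, HasGradientAt Fe (fe x) x)
    (E : EuclideanSpace ℝ (Fin n) → ℝ)
    (hE : ∀ u, E u = (1 / 2) * ⟪Matrix.toEuclideanLin A u, u⟫ + (Fc u - Fe u))
    (Δt : ℝ) (hΔt : 0 < Δt)
    (u u' : EuclideanSpace ℝ (Fin n))
    (hscheme : Δt⁻¹ • (u' - u) + Matrix.toEuclideanLin A u' + fc u' - fe u = 0) :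
    E u' ≤ E u := by
  have hdiss := convexSplitting_energy_dissipation (Matrix.isPositive_toEuclideanLin_iff.mpr hA)
    hFc hFe (hfc u') (hfe u) Δt hscheme
  have hnonneg : 0 ≤ Δt⁻¹ * ‖u' - u‖ ^ 2 := by positivity
  rw [hE, hE]
  linarith
end
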